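/- arXiv:1112.1654 — 9 statements merged into one kernel-verified Lean document; each statement's English description precedes it below -/
import Mathlib

section
/- Let V = {V_i}_{i=1}^m be a projective RS for ℂ^d with weights v_i. Define S_{V,D} = ∑_i P_{range(V_i*)} (which is positive definite) and W_0 = {v_i^{-2} V_i S_{V,D}^{-1}}_{i=1}^m. Then W_0 is a dual RS of V, and for every dual W of V, ∑_i ‖W_i* V_i‖_F² ≥ ∑_i ‖(W_0)_i* V_i‖_F², with equality if and only if W = W_0. In particular W_0 is the unique minimizer of the 2-error ( ∑_i ‖W_i* V_i‖_F² )^{1/2} over all duals of V. -/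
/-!
Projectivity `Vᵢ Vᵢᴴ = vᵢ² I` makes `vᵢ⁻² Vᵢᴴ Vᵢ` the orthogonal projection `Pᵢ`, so
`(W₀)ᵢᴴ Vᵢ = S⁻¹ Pᵢ` with `S = ∑ Pᵢ`. For a dual `W`, the operators `Aᵢ = Wᵢᴴ Vᵢ` satisfy
`Aᵢ Pᵢ = Aᵢ` and `∑ Aᵢ = I`, so `Dᵢ = Aᵢ - S⁻¹ Pᵢ` satisfies `Dᵢ Pᵢ = Dᵢ` and `∑ Dᵢ = 0`. Hence
`∑ tr((S⁻¹ Pᵢ)ᴴ Dᵢ) = tr(S⁻¹ ∑ Dᵢ) = 0`, and Pythagoras gives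
`∑ ‖Aᵢ‖² = ∑ ‖S⁻¹ Pᵢ‖² + ∑ ‖Dᵢ‖²`. Equality forces every `Dᵢ = 0`, and `Wᵢ` is recovered from
`Wᵢᴴ Vᵢ` by multiplying with `Vᵢᴴ`.
-/

open scoped Matrix ComplexOrder

/-- The Frobenius norm of a complex matrix. -/
noncomputable def frob {m n : ℕ} (A : Matrix (Fin m) (Fin n) ℂ) : ℝ :=
  Real.sqrt ((Matrix.trace (Aᴴ * A)).re)

open Matrix

section Frobenius

variable {p q : ℕ}

theorem ofReal_frob_sq (M : Matrix (Fin p) (Fin q) ℂ) :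
    ((frob M ^ 2 : ℝ) : ℂ) = (Mᴴ * M).trace := by
  obtain ⟨hre, him⟩ := Complex.nonneg_iff.1 (posSemidef_conjTranspose_mul_self M).trace_nonneg
  rw [frob, Real.sq_sqrt hre]
  exact Complex.ext rfl him

theorem frob_eq_zero_iff {M : Matrix (Fin p) (Fin q) ℂ} : frob M = 0 ↔ M = 0 := by
  rw [← trace_conjTranspose_mul_self_eq_zero_iff, ← ofReal_frob_sq]
  simp

theorem sum_frob_add_sq {ι : Type*} [Fintype ι] (X Y : ι → Matrix (Fin p) (Fin q) ℂ)
    (h : ∑ i, ((X i)ᴴ * Y i).trace = 0) :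
    ∑ i, frob (X i + Y i) ^ 2 = ∑ i, frob (X i) ^ 2 + ∑ i, frob (Y i) ^ 2 := by
  have hsymm : ∑ i, ((Y i)ᴴ * X i).trace = 0 := by
    have hstar (i) : ((Y i)ᴴ * X i).trace = star ((X i)ᴴ * Y i).trace := by
      rw [← trace_conjTranspose, conjTranspose_mul, conjTranspose_conjTranspose]
    simp only [hstar, ← star_sum, h, star_zero]
  have hC : ∑ i, ((frob (X i + Y i) ^ 2 : ℝ) : ℂ) =
      ∑ i, ((frob (X i) ^ 2 : ℝ) : ℂ) + ∑ i, ((frob (Y i) ^ 2 : ℝ) : ℂ) := by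
    simp only [ofReal_frob_sq, conjTranspose_add, Matrix.add_mul, Matrix.mul_add, trace_add,
      Finset.sum_add_distrib, h, hsymm]
    ring
  exact_mod_cast hC

end Frobenius

section Projection

variable {R n : Type*} [CommRing R] [Fintype n] [DecidableEq n]

theorem Matrix.mul_eq_right_of_range_le {P Q : Matrix n n R} (hQ : IsIdempotentElem Q)
    (h : LinearMap.range P.mulVecLin ≤ LinearMap.range Q.mulVecLin) : Q * P = P := by
  have hQ' : IsIdempotentElem Q.mulVecLin := by
    rw [IsIdempotentElem, Module.End.mul_eq_comp, ← mulVecLin_mul, hQ.eq]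
  apply toLin'.injective
  rw [toLin'_mul]
  exact (LinearMap.IsIdempotentElem.comp_eq_right_iff hQ' _).2 h

theorem Matrix.eq_of_isStarProjection_of_range_eq [StarRing R] {P Q : Matrix n n R}
    (hP : IsStarProjection P) (hQ : IsStarProjection Q)
    (h : LinearMap.range P.mulVecLin = LinearMap.range Q.mulVecLin) : P = Q := by
  have hQP : Q * P = P := mul_eq_right_of_range_le hQ.isIdempotentElem h.le
  have hPQ : P * Q = Q := mul_eq_right_of_range_le hP.isIdempotentElem h.ge
  have := congrArg star hPQ
  rw [star_mul, hP.isSelfAdjoint.star_eq, hQ.isSelfAdjoint.star_eq] at this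
  rw [← hQP, this]

end Projection

section Projective

variable {k n : Type*} [Fintype k] [Fintype n] [DecidableEq k]
  {V : Matrix k n ℂ} {c : ℝ}

theorem isStarProjection_smul_conjTranspose_mul_self (hc : c ≠ 0) (hV : V * Vᴴ = (c : ℂ) • 1) :
    IsStarProjection ((c : ℂ)⁻¹ • (Vᴴ * V)) where
  isIdempotentElem := by
    have hc' : (c : ℂ) ≠ 0 := Complex.ofReal_ne_zero.2 hc
    rw [IsIdempotentElem, smul_mul_smul_comm, Matrix.mul_assoc, ← Matrix.mul_assoc V, hV,
      Matrix.smul_mul, Matrix.one_mul, Matrix.mul_smul, smul_smul, inv_mul_cancel_right₀ hc']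
  isSelfAdjoint := by
    have hc' : IsSelfAdjoint ((c : ℂ)⁻¹) := by
      rw [← Complex.ofReal_inv]
      exact Complex.conj_ofReal _
    exact hc'.smul (isHermitian_conjTranspose_mul_self V)

theorem mul_smul_conjTranspose_mul_self (hc : c ≠ 0) (hV : V * Vᴴ = (c : ℂ) • 1) :
    V * ((c : ℂ)⁻¹ • (Vᴴ * V)) = V := by
  rw [Matrix.mul_smul, ← Matrix.mul_assoc, hV, Matrix.smul_mul, Matrix.one_mul, smul_smul,
    inv_mul_cancel₀ (Complex.ofReal_ne_zero.2 hc), one_smul]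

theorem range_smul_conjTranspose_mul_self (hc : c ≠ 0) (hV : V * Vᴴ = (c : ℂ) • 1) :
    LinearMap.range ((c : ℂ)⁻¹ • (Vᴴ * V)).mulVecLin = LinearMap.range Vᴴ.mulVecLin := by
  set Q := (c : ℂ)⁻¹ • (Vᴴ * V)
  have hVQ : Vᴴ = Q * Vᴴ := by
    conv_lhs => rw [← mul_smul_conjTranspose_mul_self hc hV]
    have hQ : Q.IsHermitian := (isStarProjection_smul_conjTranspose_mul_self hc hV).isSelfAdjoint
    rw [conjTranspose_mul, hQ.eq]
  apply le_antisymm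
  · rw [show Q = Vᴴ * ((c : ℂ)⁻¹ • V) from (Matrix.mul_smul _ _ _).symm, mulVecLin_mul]
    exact LinearMap.range_comp_le_range _ _
  · rw [hVQ, mulVecLin_mul]
    exact LinearMap.range_comp_le_range _ _

theorem eq_of_mul_eq_mul_of_projective {m : Type*} (hc : c ≠ 0) (hV : V * Vᴴ = (c : ℂ) • 1)
    {X Y : Matrix m k ℂ} (h : X * V = Y * V) : X = Y := by
  have h' := congrArg (· * Vᴴ) h
  simp only [Matrix.mul_assoc, hV, Matrix.mul_smul, Matrix.mul_one] at h'
  exact smul_right_injective _ (Complex.ofReal_ne_zero.2 hc) h'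

end Projective

theorem Matrix.posDef_sum_smul {ι n : Type*} [Fintype ι] [Fintype n] {A : ι → Matrix n n ℂ}
    (hA : ∀ i, (A i).PosSemidef) (h : (∑ i, A i).PosDef) {r : ι → ℂ} (hr : ∀ i, 0 < r i) :
    (∑ i, r i • A i).PosDef := by
  refine .of_dotProduct_mulVec_pos
    (posSemidef_sum _ fun i _ ↦ (hA i).smul (hr i).le).isHermitian fun x hx ↦ ?_
  have hq := h.dotProduct_mulVec_pos hx
  simp only [sum_mulVec, dotProduct_sum, smul_mulVec, dotProduct_smul, smul_eq_mul] at hq ⊢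
  have hnn (i) : 0 ≤ star x ⬝ᵥ (A i *ᵥ x) := (hA i).dotProduct_mulVec_nonneg x
  obtain ⟨j, -, hj⟩ : ∃ j ∈ Finset.univ, star x ⬝ᵥ (A j *ᵥ x) ≠ 0 := by
    by_contra! h0
    rw [Finset.sum_eq_zero h0] at hq
    exact hq.false
  exact Finset.sum_pos' (fun i _ ↦ mul_nonneg (hr i).le (hnn i))
    ⟨j, Finset.mem_univ j, mul_pos (hr j) ((hnn j).lt_of_ne' hj)⟩

section CanonicalDual

variable {ι R n : Type*} [Fintype ι] [Fintype n]

theorem sum_nonsing_inv_sum_mul [DecidableEq n] [CommRing R] {P : ι → Matrix n n R}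
    (h : IsUnit (∑ j, P j)) :
    ∑ i, (∑ j, P j)⁻¹ * P i = 1 := by
  rw [← Finset.mul_sum]
  exact nonsing_inv_mul _ ((isUnit_iff_isUnit_det _).1 h)

theorem sum_trace_conjTranspose_mul_eq [CommRing R] [StarRing R] {P : ι → Matrix n n R}
    (hP : ∀ i, (P i).IsHermitian) {H : Matrix n n R} (hH : H.IsHermitian)
    {D : ι → Matrix n n R} (hD : ∀ i, D i * P i = D i) :
    ∑ i, ((H * P i)ᴴ * D i).trace = (H * ∑ i, D i).trace := by
  have hterm (i) : ((H * P i)ᴴ * D i).trace = (H * D i).trace := by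
    rw [conjTranspose_mul, (hP i).eq, hH.eq, Matrix.mul_assoc, trace_mul_comm, Matrix.mul_assoc,
      hD i]
  simp only [hterm, Finset.mul_sum, trace_sum]

theorem sum_frob_sq_eq_of_sum_eq_one {d : ℕ} {P : ι → Matrix (Fin d) (Fin d) ℂ}
    (hP : ∀ i, IsStarProjection (P i)) (hS : IsUnit (∑ j, P j))
    {A : ι → Matrix (Fin d) (Fin d) ℂ} (hA : ∑ i, A i = 1) (hAP : ∀ i, A i * P i = A i) :
    ∑ i, frob (A i) ^ 2 =
      ∑ i, frob ((∑ j, P j)⁻¹ * P i) ^ 2 + ∑ i, frob (A i - (∑ j, P j)⁻¹ * P i) ^ 2 := by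
  set B := fun i ↦ (∑ j, P j)⁻¹ * P i
  have hSinv : (∑ j, P j)⁻¹.IsHermitian :=
    IsHermitian.inv (isSelfAdjoint_sum _ fun i _ ↦ (hP i).isSelfAdjoint)
  have hD (i) : (A i - B i) * P i = A i - B i := by
    rw [Matrix.sub_mul, hAP, Matrix.mul_assoc, (hP i).isIdempotentElem.eq]
  have hD0 : ∑ i, (A i - B i) = 0 := by
    rw [Finset.sum_sub_distrib, hA, sum_nonsing_inv_sum_mul hS, sub_self]
  have horth : ∑ i, ((B i)ᴴ * (A i - B i)).trace = 0 := by
    rw [sum_trace_conjTranspose_mul_eq (fun i ↦ (hP i).isSelfAdjoint) hSinv hD, hD0,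
      Matrix.mul_zero, trace_zero]
  simpa using sum_frob_add_sq B (fun i ↦ A i - B i) horth

end CanonicalDual

/-- for a projective RS `V` with weights `vᵢ`, with
`S_{V,D} = ∑ᵢ P_{range(Vᵢᴴ)}` (positive definite) and
`W₀ = {vᵢ⁻² Vᵢ S_{V,D}⁻¹}`, the system `W₀` is a dual of `V` and it is the unique
minimizer of the 2-error `(∑ᵢ ‖Wᵢᴴ Vᵢ‖_F²)^{1/2}` over all duals `W` of `V`. -/
theorem unique_optimal_dual_for_two_error
    {d m : ℕ} (k : Fin m → ℕ) (V : ∀ i, Matrix (Fin (k i)) (Fin d) ℂ)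
    (v : Fin m → ℝ) (hv : ∀ i, 0 < v i)
    (hproj : ∀ i, V i * (V i)ᴴ = (((v i) ^ 2 : ℝ) : ℂ) • 1)
    (hV : (∑ i, (V i)ᴴ * V i).PosDef)
    -- `P i` is the orthogonal projection onto `range (V i)ᴴ`
    (P : Fin m → Matrix (Fin d) (Fin d) ℂ)
    (hP : ∀ i, (P i)ᴴ = P i ∧ P i * P i = P i ∧
      LinearMap.range (P i).mulVecLin = LinearMap.range ((V i)ᴴ).mulVecLin)
    (W₀ : ∀ i, Matrix (Fin (k i)) (Fin d) ℂ)
    (hW₀ : ∀ i, W₀ i = ((((v i) ^ 2 : ℝ) : ℂ))⁻¹ • (V i * (∑ j, P j)⁻¹)) :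
    (∑ j, P j).PosDef ∧
    (∑ i, (W₀ i)ᴴ * V i) = 1 ∧
    ∀ W : ∀ i, Matrix (Fin (k i)) (Fin d) ℂ, (∑ i, (W i)ᴴ * V i) = 1 →
      (∑ i, frob ((W₀ i)ᴴ * V i) ^ 2 ≤ ∑ i, frob ((W i)ᴴ * V i) ^ 2) ∧
      ((∑ i, frob ((W i)ᴴ * V i) ^ 2) = (∑ i, frob ((W₀ i)ᴴ * V i) ^ 2) ↔ W = W₀) := by
  have hc (i) : v i ^ 2 ≠ 0 := (pow_pos (hv i) 2).ne'
  have hPstar (i) : IsStarProjection (P i) := ⟨(hP i).2.1, (hP i).1⟩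
  have hPV (i) : P i = ((v i ^ 2 : ℝ) : ℂ)⁻¹ • ((V i)ᴴ * V i) :=
    eq_of_isStarProjection_of_range_eq (hPstar i)
      (isStarProjection_smul_conjTranspose_mul_self (hc i) (hproj i))
      ((hP i).2.2.trans (range_smul_conjTranspose_mul_self (hc i) (hproj i)).symm)
  have hS : (∑ j, P j).PosDef := by
    simp only [hPV]
    exact posDef_sum_smul (fun i ↦ posSemidef_conjTranspose_mul_self _) hV
      fun i ↦ inv_pos.2 (Complex.zero_lt_real.2 (pow_pos (hv i) 2))
  have hW₀V (i) : (W₀ i)ᴴ * V i = (∑ j, P j)⁻¹ * P i := by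
    rw [hW₀, conjTranspose_smul, conjTranspose_mul, hS.isHermitian.inv.eq, ← Complex.ofReal_inv,
      Complex.star_def, Complex.conj_ofReal, Complex.ofReal_inv, Matrix.smul_mul,
      Matrix.mul_assoc, hPV i, Matrix.mul_smul]
  simp only [hW₀V]
  refine ⟨hS, sum_nonsing_inv_sum_mul hS.isUnit, fun W hW ↦ ?_⟩
  have hpyth := sum_frob_sq_eq_of_sum_eq_one hPstar hS.isUnit hW fun i ↦ by
    rw [Matrix.mul_assoc, hPV i, mul_smul_conjTranspose_mul_self (hc i) (hproj i)]
  have hdiff : 0 ≤ ∑ i, frob ((W i)ᴴ * V i - (∑ j, P j)⁻¹ * P i) ^ 2 := by positivity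
  refine ⟨by linarith, fun heq ↦ funext fun i ↦ ?_, by rintro rfl; simp only [hW₀V]⟩
  have hzero := (Finset.sum_eq_zero_iff_of_nonneg fun i _ ↦ by positivity).1
    (show ∑ i, frob ((W i)ᴴ * V i - (∑ j, P j)⁻¹ * P i) ^ 2 = 0 by linarith) i (Finset.mem_univ i)
  rw [sq_eq_zero_iff, frob_eq_zero_iff, sub_eq_zero, ← hW₀V] at hzero
  exact conjTranspose_injective (eq_of_mul_eq_mul_of_projective (hc i) (hproj i) hzero)
end

section
/- Let V = {V_i}_{i=1}^m be a uniform projective RS for ℂ^d (all weights equal to some v > 0). Then the unique dual RS minimizing the 2-error (∑_i ‖W_i* V_i‖_F²)^{1/2} over all duals W of V is the canonical dual V^# = {V_i S_V^{-1}}. -/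
open scoped Matrix ComplexOrder

lemma trace_re_eq {a b : ℕ} (A : Matrix (Fin a) (Fin b) ℂ) :
    (Matrix.trace (Aᴴ * A)).re = ∑ j, ∑ i, Complex.normSq (A i j) := by
  simp [Matrix.trace, Matrix.diag, Matrix.mul_apply, Matrix.conjTranspose_apply,
    Complex.normSq_apply, Complex.mul_re]

lemma trace_re_nonneg {a b : ℕ} (A : Matrix (Fin a) (Fin b) ℂ) :
    0 ≤ (Matrix.trace (Aᴴ * A)).re := by
  rw [trace_re_eq]
  exact Finset.sum_nonneg fun j _ => Finset.sum_nonneg fun i _ => Complex.normSq_nonneg _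

lemma frob_sq {a b : ℕ} (A : Matrix (Fin a) (Fin b) ℂ) :
    frob A ^ 2 = (Matrix.trace (Aᴴ * A)).re :=
  Real.sq_sqrt (trace_re_nonneg A)

lemma eq_zero_of_trace_re {a b : ℕ} (A : Matrix (Fin a) (Fin b) ℂ)
    (h : (Matrix.trace (Aᴴ * A)).re = 0) : A = 0 := by
  rw [trace_re_eq] at h
  ext i j
  have hj := (Finset.sum_eq_zero_iff_of_nonneg
    (fun j _ => Finset.sum_nonneg fun i _ => Complex.normSq_nonneg _)).1 h j (by simp)
  have hij := (Finset.sum_eq_zero_iff_of_nonneg (fun i _ => Complex.normSq_nonneg _)).1 hj i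
    (by simp)
  simpa [Complex.normSq_eq_zero] using hij

/-- for a uniform projective RS (all weights equal to `v > 0`), the
canonical dual `V^# = {Vᵢ S_V⁻¹}` is the unique dual minimizing the 2-error. -/
theorem canonical_dual_optimal_for_uniform
    {d m : ℕ} (k : Fin m → ℕ) (V : ∀ i, Matrix (Fin (k i)) (Fin d) ℂ)
    (v : ℝ) (hv : 0 < v)
    (hproj : ∀ i, V i * (V i)ᴴ = ((v ^ 2 : ℝ) : ℂ) • 1)
    (hV : (∑ i, (V i)ᴴ * V i).PosDef)
    (Vsharp : ∀ i, Matrix (Fin (k i)) (Fin d) ℂ)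
    (hVs : ∀ i, Vsharp i = V i * (∑ j, (V j)ᴴ * V j)⁻¹) :
    (∑ i, (Vsharp i)ᴴ * V i) = 1 ∧
    ∀ W : ∀ i, Matrix (Fin (k i)) (Fin d) ℂ, (∑ i, (W i)ᴴ * V i) = 1 →
      (∑ i, frob ((Vsharp i)ᴴ * V i) ^ 2 ≤ ∑ i, frob ((W i)ᴴ * V i) ^ 2) ∧
      ((∑ i, frob ((W i)ᴴ * V i) ^ 2) = (∑ i, frob ((Vsharp i)ᴴ * V i) ^ 2) ↔
        W = Vsharp) := by
  set S := ∑ j, (V j)ᴴ * V j with hSdef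
  have hSH : Sᴴ = S := by
    simp [hSdef, Matrix.conjTranspose_sum, Matrix.conjTranspose_mul]
  have hSinvH : (S⁻¹)ᴴ = S⁻¹ := by rw [Matrix.conjTranspose_nonsing_inv, hSH]
  have hSu : IsUnit S.det := (Matrix.isUnit_iff_isUnit_det S).1 hV.isUnit
  have hB : ∀ i, (Vsharp i)ᴴ * V i = S⁻¹ * ((V i)ᴴ * V i) := by
    intro i
    rw [hVs i, Matrix.conjTranspose_mul, hSinvH, Matrix.mul_assoc]
  have hpart1 : (∑ i, (Vsharp i)ᴴ * V i) = 1 := by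
    simp_rw [hB]
    rw [← Finset.mul_sum, ← hSdef, Matrix.nonsing_inv_mul S hSu]
  refine ⟨hpart1, ?_⟩
  intro W hW
  -- error matrices
  set E : ∀ i, Matrix (Fin d) (Fin d) ℂ := fun i => (W i - Vsharp i)ᴴ * V i with hE
  have hsplit : ∀ i, (W i)ᴴ * V i = (Vsharp i)ᴴ * V i + E i := by
    intro i
    simp [hE, Matrix.conjTranspose_sub, Matrix.sub_mul]
  have hEsum : (∑ i, E i) = 0 := by
    have : (∑ i, E i) = (∑ i, (W i)ᴴ * V i) - ∑ i, (Vsharp i)ᴴ * V i := by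
      rw [← Finset.sum_sub_distrib]
      congr 1; ext i : 1
      rw [hsplit i, add_sub_cancel_left]
    rw [this, hW, hpart1, sub_self]
  -- cross term vanishes
  have hcross : (∑ i, Matrix.trace (((Vsharp i)ᴴ * V i)ᴴ * E i)) = 0 := by
    have hterm : ∀ i, Matrix.trace (((Vsharp i)ᴴ * V i)ᴴ * E i)
        = ((v ^ 2 : ℝ) : ℂ) * Matrix.trace (S⁻¹ * E i) := by
      intro i
      have h1 : ((Vsharp i)ᴴ * V i)ᴴ = (V i)ᴴ * V i * S⁻¹ := by
        rw [hB i, Matrix.conjTranspose_mul, hSinvH, Matrix.conjTranspose_mul,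
          Matrix.conjTranspose_conjTranspose]
      rw [h1, hE]
      calc Matrix.trace ((V i)ᴴ * V i * S⁻¹ * ((W i - Vsharp i)ᴴ * V i))
          = Matrix.trace ((V i)ᴴ * (V i * S⁻¹ * (W i - Vsharp i)ᴴ * V i)) := by
            simp only [Matrix.mul_assoc]
        _ = Matrix.trace ((V i * S⁻¹ * (W i - Vsharp i)ᴴ) * (V i * (V i)ᴴ)) := by
            rw [Matrix.trace_mul_comm, Matrix.mul_assoc]
        _ = ((v ^ 2 : ℝ) : ℂ) * Matrix.trace (S⁻¹ * ((W i - Vsharp i)ᴴ * V i)) := by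
            rw [hproj i, Matrix.mul_smul, Matrix.mul_one, Matrix.trace_smul, smul_eq_mul]
            congr 1
            rw [Matrix.mul_assoc, Matrix.trace_mul_comm, Matrix.mul_assoc]
    simp_rw [hterm]
    rw [← Finset.mul_sum, ← Matrix.trace_sum, ← Finset.mul_sum, hEsum, Matrix.mul_zero,
      Matrix.trace_zero, mul_zero]
  -- Pythagoras
  have hpyth : (∑ i, frob ((W i)ᴴ * V i) ^ 2)
      = (∑ i, frob ((Vsharp i)ᴴ * V i) ^ 2) + ∑ i, frob (E i) ^ 2 := by
    have hterm : ∀ i, frob ((W i)ᴴ * V i) ^ 2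
        = frob ((Vsharp i)ᴴ * V i) ^ 2 + frob (E i) ^ 2
          + 2 * (Matrix.trace (((Vsharp i)ᴴ * V i)ᴴ * E i)).re := by
      intro i
      set B := (Vsharp i)ᴴ * V i
      rw [frob_sq, frob_sq, frob_sq, hsplit i]
      have hexp : (B + E i)ᴴ * (B + E i)
          = Bᴴ * B + (E i)ᴴ * E i + (Bᴴ * E i + (E i)ᴴ * B) := by
        rw [Matrix.conjTranspose_add]; noncomm_ring
      rw [hexp]
      have hconj : Matrix.trace ((E i)ᴴ * B) = star (Matrix.trace (Bᴴ * E i)) := by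
        conv_rhs => rw [← Matrix.trace_conjTranspose, Matrix.conjTranspose_mul,
          Matrix.conjTranspose_conjTranspose]
      simp only [Matrix.trace_add, Complex.add_re, hconj]
      have : (star (Matrix.trace (Bᴴ * E i))).re = (Matrix.trace (Bᴴ * E i)).re := by
        simp [Complex.conj_re]
      rw [this]; ring
    simp_rw [hterm]
    rw [Finset.sum_add_distrib, Finset.sum_add_distrib, ← Finset.mul_sum,
      ← Complex.re_sum, hcross]
    simp
  have hEnonneg : 0 ≤ ∑ i, frob (E i) ^ 2 :=
    Finset.sum_nonneg (fun i _ => sq_nonneg _)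
  constructor
  · rw [hpyth]; linarith
  constructor
  · intro heq
    have hEzero : (∑ i, frob (E i) ^ 2) = 0 := by rw [hpyth] at heq; linarith
    have hEi : ∀ i, E i = 0 := by
      intro i
      have h0 : frob (E i) ^ 2 = 0 :=
        (Finset.sum_eq_zero_iff_of_nonneg (fun i _ => sq_nonneg _)).1 hEzero i (by simp)
      rw [frob_sq] at h0
      exact eq_zero_of_trace_re _ h0
    funext i
    have h1 : (W i - Vsharp i)ᴴ * V i * (V i)ᴴ = 0 := by
      rw [show (W i - Vsharp i)ᴴ * V i = E i from rfl, hEi i, Matrix.zero_mul]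
    rw [Matrix.mul_assoc, hproj i, Matrix.mul_smul, Matrix.mul_one] at h1
    have hv2 : ((v ^ 2 : ℝ) : ℂ) ≠ 0 := by
      simp [pow_eq_zero_iff, hv.ne']
    have h2 : (W i - Vsharp i)ᴴ = 0 := (smul_eq_zero.1 h1).resolve_left hv2
    have h3 : W i - Vsharp i = 0 := by
      have := congrArg Matrix.conjTranspose h2
      simpa using this
    exact sub_eq_zero.1 h3
  · intro hWV
    subst hWV
    rfl
end

section
/- Let V = {V_i}_{i=1}^m be an injective RS for ℂ^d (each V_i surjective). Then the map W ↦ max_i ‖W_i* V_i‖_F is a norm on the space ⊕_i L(ℂ^d, ℂ^{k_i}), and the set of duals W of V minimizing max_i ‖W_i* V_i‖_F is nonempty, compact and convex. -/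
open scoped Matrix ComplexOrder

/-! Let `T W := (Wᵢᴴ Vᵢ)ᵢ`, a real-linear (complex-antilinear) map into a product of matrix
spaces; `N W` is the sup norm of `T W`. Invertibility of each `Vᵢ Vᵢᴴ` makes `T` injective, so `N`
is a norm and, the space being finite-dimensional, it is coercive. The duals form a closed affine
subspace containing the canonical dual `Vᵢ S⁻¹`, so the convex coercive function `N` attains its
minimum `μ` on it, and the optimal duals are the duals with `N W ≤ μ`: a compact, convex set. -/

open Filter Set

attribute [local instance] Matrix.frobeniusSeminormedAddCommGroup
  Matrix.frobeniusNormedAddCommGroup Matrix.frobeniusNormedSpace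

lemma frob_eq_norm {p q : ℕ} (A : Matrix (Fin p) (Fin q) ℂ) : frob A = ‖A‖ := by
  have h : Matrix.trace (Aᴴ * A) = ∑ j, ∑ i, ((‖A i j‖ : ℂ) ^ 2) := by
    simp [Matrix.trace, Matrix.diag, Matrix.mul_apply, Matrix.conjTranspose_apply,
      RCLike.conj_mul]
  rw [Matrix.frobenius_norm_def, frob, h, Finset.sum_comm, Real.sqrt_eq_rpow]
  norm_cast

lemma Finset.sup'_univ_norm_eq_norm {ι : Type*} [Fintype ι] {G : ι → Type*}
    [∀ i, SeminormedAddCommGroup (G i)] (h : (Finset.univ : Finset ι).Nonempty) (f : ∀ i, G i) :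
    Finset.univ.sup' h (fun i => ‖f i‖) = ‖f‖ := by
  have : Nonempty ι := Finset.univ_nonempty_iff.mp h
  exact le_antisymm (Finset.sup'_le _ _ fun i _ => norm_le_pi_norm f i)
    ((pi_norm_le_iff_of_nonempty f).mpr fun i => Finset.le_sup' (fun i => ‖f i‖) (mem_univ i))

lemma Matrix.eq_zero_of_mul_eq_zero_of_isUnit_mul {l n p α : Type*} [Fintype n] [Fintype p]
    [DecidableEq n] [CommRing α] {A : Matrix l n α} {B : Matrix n p α} {C : Matrix p n α}
    (hBC : IsUnit (B * C)) (hAB : A * B = 0) : A = 0 := by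
  calc A = A * (B * C) * (B * C)⁻¹ :=
        (Matrix.mul_nonsing_inv_cancel_right _ _ ((Matrix.isUnit_iff_isUnit_det _).mp hBC)).symm
    _ = 0 := by rw [← Matrix.mul_assoc, hAB, Matrix.zero_mul, Matrix.zero_mul]

section MinimizersOnClosedSet

variable {E : Type*} [TopologicalSpace E] {f : E → ℝ} {s : Set E}

def minimizersOn (f : E → ℝ) (s : Set E) : Set E := {x | x ∈ s ∧ ∀ y ∈ s, f x ≤ f y}

lemma isCompact_sep_le_of_tendsto_cocompact (hf : ContinuousOn f s)
    (hf_top : Tendsto f (cocompact E) atTop) (hs : IsClosed s) (r : ℝ) :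
    IsCompact {x ∈ s | f x ≤ r} := by
  obtain ⟨K, hK, hKf⟩ := mem_cocompact.mp (hf_top (Ioi_mem_atTop r))
  refine hK.of_isClosed_subset (hf.preimage_isClosed_of_isClosed hs isClosed_Iic)
    fun x hx => ?_
  by_contra hxK
  exact (hKf hxK).not_ge hx.2

lemma minimizersOn_nonempty_isCompact_convex [AddCommGroup E] [Module ℝ E]
    (hf : ContinuousOn f s) (hf_convex : ConvexOn ℝ s f)
    (hf_top : Tendsto f (cocompact E) atTop) (hs : IsClosed s) (hs_ne : s.Nonempty) :
    (minimizersOn f s).Nonempty ∧ IsCompact (minimizersOn f s) ∧ Convex ℝ (minimizersOn f s) := by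
  obtain ⟨x₀, hx₀⟩ := hs_ne
  obtain ⟨xm, hxm, hmin⟩ := hf.exists_isMinOn' hs hx₀
    ((hf_top.eventually_ge_atTop (f x₀)).filter_mono inf_le_left)
  have hM : minimizersOn f s = {x ∈ s | f x ≤ f xm} := by
    ext x
    exact ⟨fun hx => ⟨hx.1, hx.2 xm hxm⟩, fun hx => ⟨hx.1, fun y hy => hx.2.trans (hmin hy)⟩⟩
  rw [hM]
  exact ⟨⟨xm, hxm, le_rfl⟩, isCompact_sep_le_of_tendsto_cocompact hf hf_top hs _,
    hf_convex.convex_le _⟩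

end MinimizersOnClosedSet

lemma LinearMap.tendsto_norm_comp_cocompact_atTop {E F : Type*} [NormedAddCommGroup E]
    [NormedSpace ℝ E] [FiniteDimensional ℝ E] [NormedAddCommGroup F] [NormedSpace ℝ F]
    {T : E →ₗ[ℝ] F} (hT : Function.Injective T) :
    Tendsto (fun x => ‖T x‖) (cocompact E) atTop := by
  obtain ⟨K, -, hK⟩ := T.injective_iff_antilipschitz.mp hT
  rw [← Metric.cobounded_eq_cocompact]
  exact tendsto_norm_cobounded_atTop.comp hK.tendsto_cobounded

section Duals

variable {d m : ℕ} {k : Fin m → ℕ} (V : ∀ i, Matrix (Fin (k i)) (Fin d) ℂ)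

def duals : Set (∀ i, Matrix (Fin (k i)) (Fin d) ℂ) := {W | ∑ i, (W i)ᴴ * V i = 1}

noncomputable def dualPairing :
    (∀ i, Matrix (Fin (k i)) (Fin d) ℂ) →ₗ[ℝ] (Fin m → Matrix (Fin d) (Fin d) ℂ) where
  toFun W i := (W i)ᴴ * V i
  map_add' W W' := by ext1 i; simp [Matrix.add_mul]
  map_smul' a W := by ext1 i; simp [Matrix.smul_mul]

@[simp]
lemma dualPairing_apply (W : ∀ i, Matrix (Fin (k i)) (Fin d) ℂ) (i : Fin m) :
    dualPairing V W i = (W i)ᴴ * V i := rfl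

lemma dualPairing_smul (c : ℂ) (W : ∀ i, Matrix (Fin (k i)) (Fin d) ℂ) :
    dualPairing V (c • W) = star c • dualPairing V W := by
  ext1 i; simp [Matrix.smul_mul]

lemma dualPairing_injective (hinj : ∀ i, IsUnit (V i * (V i)ᴴ)) :
    Function.Injective (dualPairing V) := by
  refine (injective_iff_map_eq_zero _).mpr fun W hW => funext fun i => ?_
  have h : (W i)ᴴ = 0 :=
    Matrix.eq_zero_of_mul_eq_zero_of_isUnit_mul (hinj i) (congr_fun hW i)
  simpa using congr_arg Matrix.conjTranspose h

lemma canonicalDual_mem_duals (hV : (∑ i, (V i)ᴴ * V i).PosDef) :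
    (fun i => V i * (∑ j, (V j)ᴴ * V j)⁻¹) ∈ duals V := by
  set S := ∑ j, (V j)ᴴ * V j
  have hSH : S⁻¹ᴴ = S⁻¹ := hV.1.inv
  change ∑ i, (V i * S⁻¹)ᴴ * V i = 1
  simp only [Matrix.conjTranspose_mul, hSH, Matrix.mul_assoc, ← Finset.mul_sum]
  exact Matrix.nonsing_inv_mul S ((Matrix.isUnit_iff_isUnit_det S).mp hV.isUnit)

lemma isClosed_duals : IsClosed (duals V) :=
  isClosed_eq (continuous_finsetSum _ fun i _ =>
    ((continuous_apply i).matrix_conjTranspose).matrix_mul continuous_const) continuous_const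

lemma convex_duals : Convex ℝ (duals V) := by
  intro W hW W' hW' a b _ _ hab
  change ∑ i, dualPairing V W i = 1 at hW
  change ∑ i, dualPairing V W' i = 1 at hW'
  change ∑ i, dualPairing V (a • W + b • W') i = 1
  simp only [map_add, map_smul, Pi.add_apply, Pi.smul_apply, Finset.sum_add_distrib,
    ← Finset.smul_sum, hW, hW', ← add_smul, hab, one_smul]

end Duals

/-- for an injective RS `V`, the map `W ↦ maxᵢ ‖Wᵢᴴ Vᵢ‖_F` is a norm
on `⊕ᵢ L(ℂ^d, ℂ^{kᵢ})`, and the set of duals of `V` minimizing it is nonempty,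
compact and convex. -/
theorem optimal_duals_wce_nonempty_compact_convex
    {d m : ℕ} (hm : 0 < m) (k : Fin m → ℕ)
    (V : ∀ i, Matrix (Fin (k i)) (Fin d) ℂ)
    (hV : (∑ i, (V i)ᴴ * V i).PosDef)
    (hinj : ∀ i, IsUnit (V i * (V i)ᴴ))
    (N : (∀ i, Matrix (Fin (k i)) (Fin d) ℂ) → ℝ)
    (hN : ∀ W, N W = Finset.univ.sup'
      (Finset.univ_nonempty_iff.mpr ⟨⟨0, hm⟩⟩) (fun i => frob ((W i)ᴴ * V i))) :
    -- `N` is a norm on the space of systems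
    ((∀ W, 0 ≤ N W ∧ (N W = 0 ↔ W = 0)) ∧
     (∀ (c : ℂ) W, N (c • W) = ‖c‖ * N W) ∧
     (∀ W W', N (W + W') ≤ N W + N W')) ∧
    -- the set of 1-loss optimal duals is nonempty, compact and convex
    (let D₁ : Set (∀ i, Matrix (Fin (k i)) (Fin d) ℂ) :=
      {W | (∑ i, (W i)ᴴ * V i) = 1 ∧
        ∀ W' : ∀ i, Matrix (Fin (k i)) (Fin d) ℂ,
          (∑ i, (W' i)ᴴ * V i) = 1 → N W ≤ N W'}
     D₁.Nonempty ∧ IsCompact D₁ ∧ Convex ℝ D₁) := by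
  obtain rfl : N = fun W => ‖dualPairing V W‖ := funext fun W => by
    simp only [hN, frob_eq_norm, ← dualPairing_apply V W]
    exact Finset.sup'_univ_norm_eq_norm _ _
  have hT := dualPairing_injective V hinj
  refine ⟨⟨fun W => ⟨norm_nonneg _, by rw [norm_eq_zero, map_eq_zero_iff _ hT]⟩,
    fun c W => by simp only [dualPairing_smul, norm_smul, norm_star],
    fun W W' => by simpa only [map_add] using norm_add_le (dualPairing V W) (dualPairing V W')⟩,
    ?_⟩
  exact minimizersOn_nonempty_isCompact_convex
    (continuous_norm.comp (dualPairing V).continuous_of_finiteDimensional).continuousOn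
    (((convexOn_norm convex_univ).comp_linearMap _).subset (subset_univ _) (convex_duals V))
    (LinearMap.tendsto_norm_comp_cocompact_atTop hT) (isClosed_duals V)
    ⟨_, canonicalDual_mem_duals V hV⟩
end

section
/- Let V = {V_i}_{i=1}^m be a projective RS for ℂ^d with weights v_i, and suppose there exists c > 0 with ‖S_V^{-1} V_i* V_i‖_F = c for all i. Then the canonical dual V^# = {V_i S_V^{-1}} is the unique dual W of V minimizing the worst-case error max_i ‖W_i* V_i‖_F. -/
/-!
Write `S = ∑ᵢ Vᵢᴴ Vᵢ` and `Aᵢ(W) = Wᵢᴴ Vᵢ`. For a projective system the Frobenius inner product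
of `Aᵢ(V^#) = S⁻¹ Vᵢᴴ Vᵢ` with `Aᵢ(W)` equals `vᵢ² tr (S⁻¹ Aᵢ(W))`, so for every dual `W`
`∑ᵢ vᵢ⁻² ⟪Aᵢ(V^#), Aᵢ(W)⟫ = tr S⁻¹ = ∑ᵢ vᵢ⁻² ‖Aᵢ(V^#)‖²`.
If `‖Aᵢ(W)‖ ≤ ‖Aᵢ(V^#)‖` for all `i`, Cauchy–Schwarz makes every term of the left sum at most
the matching term on the right, so all are equalities and `Aᵢ(W) = Aᵢ(V^#)`; multiplying on
the right by `Vᵢᴴ` then gives `W = V^#`. When all `‖Aᵢ(V^#)‖` equal `c`, a dual with worst-case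
error at most `c` satisfies this hypothesis, which yields both optimality and uniqueness.
-/

open scoped Matrix ComplexOrder

open scoped InnerProductSpace

section InnerProductSpace

variable {𝕜 E : Type*} [RCLike 𝕜] [NormedAddCommGroup E] [InnerProductSpace 𝕜 E]

theorem eq_of_norm_le_of_re_inner_eq_norm_sq {x y : E} (hle : ‖y‖ ≤ ‖x‖)
    (hinner : RCLike.re ⟪x, y⟫_𝕜 = ‖x‖ ^ 2) : y = x := by
  have hsub : ‖x - y‖ = 0 := by
    have h := norm_sub_sq (𝕜 := 𝕜) x y
    rw [hinner] at h
    nlinarith [norm_nonneg y, norm_nonneg (x - y)]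
  exact (sub_eq_zero.mp (norm_eq_zero.mp hsub)).symm

theorem eq_of_sum_mul_re_inner_eq_of_norm_le {ι : Type*} [Fintype ι] {w : ι → ℝ}
    (hw : ∀ i, 0 < w i) {x y : ι → E} (hle : ∀ i, ‖y i‖ ≤ ‖x i‖)
    (hsum : ∑ i, w i * RCLike.re ⟪x i, y i⟫_𝕜 = ∑ i, w i * ‖x i‖ ^ 2) : y = x := by
  have hgap : ∀ i, 0 ≤ w i * (‖x i‖ ^ 2 - RCLike.re ⟪x i, y i⟫_𝕜) := fun i => by
    have hcs := re_inner_le_norm (𝕜 := 𝕜) (x i) (y i)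
    have := mul_le_mul_of_nonneg_left (hle i) (norm_nonneg (x i))
    exact mul_nonneg (hw i).le (by nlinarith)
  have hzero : ∑ i, w i * (‖x i‖ ^ 2 - RCLike.re ⟪x i, y i⟫_𝕜) = 0 := by
    simp only [mul_sub, Finset.sum_sub_distrib, hsum, sub_self]
  funext i
  have hi := (Finset.sum_eq_zero_iff_of_nonneg fun i _ => hgap i).mp hzero i
    (Finset.mem_univ i)
  refine eq_of_norm_le_of_re_inner_eq_norm_sq (𝕜 := 𝕜) (hle i) ?_
  linarith [(mul_eq_zero.mp hi).resolve_left (hw i).ne']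

end InnerProductSpace

section Frobenius

variable {a b : ℕ}

noncomputable def frobVec (A : Matrix (Fin a) (Fin b) ℂ) : EuclideanSpace ℂ (Fin a × Fin b) :=
  WithLp.toLp 2 (Function.uncurry A)

theorem frobVec_injective : Function.Injective (frobVec (a := a) (b := b)) :=
  fun _ _ h => Function.uncurry_injective (WithLp.toLp_injective 2 h)

theorem inner_frobVec (A B : Matrix (Fin a) (Fin b) ℂ) :
    ⟪frobVec A, frobVec B⟫_ℂ = (Aᴴ * B).trace := by
  simp only [PiLp.inner_apply, RCLike.inner_apply, frobVec, Matrix.trace, Matrix.diag,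
    Matrix.mul_apply, Matrix.conjTranspose_apply, starRingEnd_apply, Fintype.sum_prod_type]
  rw [Finset.sum_comm]
  exact Finset.sum_congr rfl fun _ _ => Finset.sum_congr rfl fun _ _ => mul_comm _ _

theorem frob_eq_norm_frobVec (A : Matrix (Fin a) (Fin b) ℂ) : frob A = ‖frobVec A‖ := by
  rw [frob, norm_eq_sqrt_re_inner (𝕜 := ℂ), inner_frobVec]
  rfl

end Frobenius

section ProjectiveSystem

variable {ι : Type*} [Fintype ι] {k : ι → ℕ} {d : ℕ}

def frameOp (V : ∀ i, Matrix (Fin (k i)) (Fin d) ℂ) : Matrix (Fin d) (Fin d) ℂ :=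
  ∑ i, (V i)ᴴ * V i

def IsDual (V W : ∀ i, Matrix (Fin (k i)) (Fin d) ℂ) : Prop :=
  ∑ i, (W i)ᴴ * V i = 1

noncomputable def canonicalDual (V : ∀ i, Matrix (Fin (k i)) (Fin d) ℂ) (i : ι) :
    Matrix (Fin (k i)) (Fin d) ℂ :=
  V i * (frameOp V)⁻¹

theorem frameOp_isHermitian (V : ∀ i, Matrix (Fin (k i)) (Fin d) ℂ) :
    (frameOp V).IsHermitian := by
  simp only [frameOp, Matrix.IsHermitian, Matrix.conjTranspose_sum,
    (Matrix.isHermitian_conjTranspose_mul_self _).eq]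

theorem canonicalDual_conjTranspose_mul (V : ∀ i, Matrix (Fin (k i)) (Fin d) ℂ) (i : ι) :
    (canonicalDual V i)ᴴ * V i = (frameOp V)⁻¹ * ((V i)ᴴ * V i) := by
  rw [canonicalDual, Matrix.conjTranspose_mul, (frameOp_isHermitian V).inv.eq, Matrix.mul_assoc]

theorem isDual_canonicalDual {V : ∀ i, Matrix (Fin (k i)) (Fin d) ℂ}
    (hS : IsUnit (frameOp V).det) : IsDual V (canonicalDual V) := by
  simp only [IsDual, canonicalDual_conjTranspose_mul, ← Finset.mul_sum]
  exact Matrix.nonsing_inv_mul _ hS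

theorem trace_mul_mul_of_mul_conjTranspose_eq_smul {m n : ℕ} {P : Matrix (Fin m) (Fin n) ℂ}
    {t : ℂ} (hP : P * Pᴴ = t • 1) (M : Matrix (Fin n) (Fin n) ℂ) (Q : Matrix (Fin n) (Fin m) ℂ) :
    (Pᴴ * (P * M) * (Q * P)).trace = t * (M * (Q * P)).trace := by
  calc (Pᴴ * (P * M) * (Q * P)).trace = (P * M * Q * (P * Pᴴ)).trace := by
        rw [Matrix.mul_assoc, Matrix.trace_mul_comm]; simp only [Matrix.mul_assoc]
    _ = t * (P * (M * Q)).trace := by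
        rw [hP, Matrix.mul_smul, Matrix.mul_one, Matrix.trace_smul, smul_eq_mul,
          Matrix.mul_assoc]
    _ = t * (M * (Q * P)).trace := by rw [Matrix.trace_mul_comm, Matrix.mul_assoc]

theorem sum_inv_mul_trace_eq_trace_inv_frameOp {V W : ∀ i, Matrix (Fin (k i)) (Fin d) ℂ}
    {t : ι → ℝ} (hproj : ∀ i, V i * (V i)ᴴ = (t i : ℂ) • 1) (ht : ∀ i, t i ≠ 0)
    (hW : IsDual V W) :
    ∑ i, (t i : ℂ)⁻¹ * (((canonicalDual V i)ᴴ * V i)ᴴ * ((W i)ᴴ * V i)).trace =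
      (frameOp V)⁻¹.trace := by
  have hterm : ∀ i, (t i : ℂ)⁻¹ * (((canonicalDual V i)ᴴ * V i)ᴴ * ((W i)ᴴ * V i)).trace =
      ((frameOp V)⁻¹ * ((W i)ᴴ * V i)).trace := fun i => by
    rw [Matrix.conjTranspose_mul, Matrix.conjTranspose_conjTranspose, canonicalDual,
      trace_mul_mul_of_mul_conjTranspose_eq_smul (hproj i), inv_mul_cancel_left₀]
    exact_mod_cast ht i
  simp only [hterm, ← Matrix.trace_sum, ← Finset.mul_sum]
  rw [show ∑ i, (W i)ᴴ * V i = 1 from hW, Matrix.mul_one]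

theorem eq_canonicalDual_of_frob_le {V W : ∀ i, Matrix (Fin (k i)) (Fin d) ℂ} {t : ι → ℝ}
    (hproj : ∀ i, V i * (V i)ᴴ = (t i : ℂ) • 1) (ht : ∀ i, 0 < t i)
    (hS : IsUnit (frameOp V).det) (hW : IsDual V W)
    (hle : ∀ i, frob ((W i)ᴴ * V i) ≤ frob ((canonicalDual V i)ᴴ * V i)) :
    W = canonicalDual V := by
  have hcorr : ∀ W, IsDual V W → ∑ i, (t i)⁻¹ *
      RCLike.re ⟪frobVec ((canonicalDual V i)ᴴ * V i), frobVec ((W i)ᴴ * V i)⟫_ℂ =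
      ((frameOp V)⁻¹.trace).re := fun W hW => by
    rw [← sum_inv_mul_trace_eq_trace_inv_frameOp hproj (fun i => (ht i).ne') hW,
      Complex.re_sum]
    refine Finset.sum_congr rfl fun i _ => ?_
    rw [inner_frobVec, ← Complex.ofReal_inv, Complex.re_ofReal_mul, RCLike.re_to_complex]
  have herr := eq_of_sum_mul_re_inner_eq_of_norm_le (𝕜 := ℂ) (fun i => inv_pos.mpr (ht i))
    (x := fun i => frobVec ((canonicalDual V i)ᴴ * V i)) (y := fun i => frobVec ((W i)ᴴ * V i))
    (fun i => by simpa only [frob_eq_norm_frobVec] using hle i)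
    (by simp only [hcorr W hW, ← hcorr _ (isDual_canonicalDual hS), inner_self_eq_norm_sq])
  funext i
  have hAi := frobVec_injective (congrFun herr i)
  have hsmul : (t i : ℂ) • (W i)ᴴ = (t i : ℂ) • (canonicalDual V i)ᴴ := by
    simpa only [Matrix.mul_assoc, hproj i, Matrix.mul_smul, Matrix.mul_one] using
      congrArg (· * (V i)ᴴ) hAi
  exact Matrix.conjTranspose_injective
    (smul_right_injective _ (by exact_mod_cast (ht i).ne') hsmul)

end ProjectiveSystem

theorem canonical_dual_unique_optimal_wce_general
    {d m : ℕ} (hm : 0 < m) (k : Fin m → ℕ)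
    (V : ∀ i, Matrix (Fin (k i)) (Fin d) ℂ)
    (v : Fin m → ℝ) (hv : ∀ i, 0 < v i)
    (hproj : ∀ i, V i * (V i)ᴴ = (((v i) ^ 2 : ℝ) : ℂ) • 1)
    (hV : (∑ i, (V i)ᴴ * V i).PosDef)
    (c : ℝ)
    (hconst : ∀ i, frob ((∑ j, (V j)ᴴ * V j)⁻¹ * ((V i)ᴴ * V i)) = c)
    (N : (∀ i, Matrix (Fin (k i)) (Fin d) ℂ) → ℝ)
    (hN : ∀ W, N W = Finset.univ.sup'
      (Finset.univ_nonempty_iff.mpr ⟨⟨0, hm⟩⟩) (fun i => frob ((W i)ᴴ * V i)))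
    (Vsharp : ∀ i, Matrix (Fin (k i)) (Fin d) ℂ)
    (hVs : ∀ i, Vsharp i = V i * (∑ j, (V j)ᴴ * V j)⁻¹) :
    (∑ i, (Vsharp i)ᴴ * V i) = 1 ∧
    (∀ W : ∀ i, Matrix (Fin (k i)) (Fin d) ℂ, (∑ i, (W i)ᴴ * V i) = 1 →
      N Vsharp ≤ N W) ∧
    (∀ W : ∀ i, Matrix (Fin (k i)) (Fin d) ℂ, (∑ i, (W i)ᴴ * V i) = 1 →
      (∀ W' : ∀ i, Matrix (Fin (k i)) (Fin d) ℂ,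
        (∑ i, (W' i)ᴴ * V i) = 1 → N W ≤ N W') → W = Vsharp) := by
  obtain rfl : Vsharp = canonicalDual V := funext hVs
  have herr : ∀ i, frob ((canonicalDual V i)ᴴ * V i) = c := fun i => by
    rw [canonicalDual_conjTranspose_mul]; exact hconst i
  have hdual : IsDual V (canonicalDual V) := isDual_canonicalDual hV.det_pos.ne'.isUnit
  have hNsharp : N (canonicalDual V) = c := by simp only [hN, herr, Finset.sup'_const]
  have hle_N : ∀ W i, frob ((W i)ᴴ * V i) ≤ N W := fun W i => by
    rw [hN]; exact Finset.le_sup' (fun j => frob ((W j)ᴴ * V j)) (Finset.mem_univ i)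
  have hunique : ∀ W, IsDual V W → N W ≤ c → W = canonicalDual V := fun W hW hWc =>
    eq_canonicalDual_of_frob_le hproj (fun i => pow_pos (hv i) 2) hV.det_pos.ne'.isUnit hW
      fun i => herr i ▸ (hle_N W i).trans hWc
  refine ⟨hdual, fun W hW => ?_, fun W hW hmin => hunique W hW (hNsharp ▸ hmin _ hdual)⟩
  by_contra! hlt
  have hW_eq := hunique W hW (hlt.le.trans_eq hNsharp)
  exact hlt.ne (by rw [hW_eq])

/-- if `V` is a projective RS with `‖S_V⁻¹ Vᵢᴴ Vᵢ‖_F = c` for all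
`i`, then the canonical dual `V^# = {Vᵢ S_V⁻¹}` is the unique dual minimizing the
worst-case error `maxᵢ ‖Wᵢᴴ Vᵢ‖_F`. -/
theorem canonical_dual_unique_optimal_wce
    {d m : ℕ} (hm : 0 < m) (k : Fin m → ℕ)
    (V : ∀ i, Matrix (Fin (k i)) (Fin d) ℂ)
    (v : Fin m → ℝ) (hv : ∀ i, 0 < v i)
    (hproj : ∀ i, V i * (V i)ᴴ = (((v i) ^ 2 : ℝ) : ℂ) • 1)
    (hV : (∑ i, (V i)ᴴ * V i).PosDef)
    (c : ℝ) (hc : 0 < c)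
    (hconst : ∀ i, frob ((∑ j, (V j)ᴴ * V j)⁻¹ * ((V i)ᴴ * V i)) = c)
    (N : (∀ i, Matrix (Fin (k i)) (Fin d) ℂ) → ℝ)
    (hN : ∀ W, N W = Finset.univ.sup'
      (Finset.univ_nonempty_iff.mpr ⟨⟨0, hm⟩⟩) (fun i => frob ((W i)ᴴ * V i)))
    (Vsharp : ∀ i, Matrix (Fin (k i)) (Fin d) ℂ)
    (hVs : ∀ i, Vsharp i = V i * (∑ j, (V j)ᴴ * V j)⁻¹) :
    (∑ i, (Vsharp i)ᴴ * V i) = 1 ∧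
    (∀ W : ∀ i, Matrix (Fin (k i)) (Fin d) ℂ, (∑ i, (W i)ᴴ * V i) = 1 →
      N Vsharp ≤ N W) ∧
    (∀ W : ∀ i, Matrix (Fin (k i)) (Fin d) ℂ, (∑ i, (W i)ᴴ * V i) = 1 →
      (∀ W' : ∀ i, Matrix (Fin (k i)) (Fin d) ℂ,
        (∑ i, (W' i)ᴴ * V i) = 1 → N W ≤ N W') → W = Vsharp) :=
  canonical_dual_unique_optimal_wce_general hm k V v hv hproj hV c hconst N hN Vsharp hVs
end

section
/- Let V = {V_i}_{i=1}^m be an RS for ℂ^d, J ⊂ {1,…,m}, and M_J = I - ∑_{i∈J} V_i* V_i S_V^{-1}. Then the truncated system V_J = {V_i}_{i∉J} is an RS for ℂ^d if and only if M_J is invertible, and in that case S_{V_J} = M_J S_V. -/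
open scoped Matrix ComplexOrder

theorem Matrix.sum_compl_eq_one_sub_mul_inv_mul {ι n R : Type*} [Fintype ι] [DecidableEq ι]
    [Fintype n] [DecidableEq n] [CommRing R] (A : ι → Matrix n n R) (J : Finset ι)
    (hS : IsUnit (∑ i, A i).det) :
    ∑ i ∈ Jᶜ, A i = (1 - (∑ i ∈ J, A i) * (∑ i, A i)⁻¹) * ∑ i, A i := by
  rw [sub_mul, one_mul, nonsing_inv_mul_cancel_right _ _ hS, ← Finset.sum_compl_add_sum J,
    add_sub_cancel_right]

theorem Matrix.posSemidef_sum_conjTranspose_mul_self {ι : Type*} {n : Type*} {k : ι → Type*}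
    [Fintype n] [∀ i, Fintype (k i)] {𝕜 : Type*} [RCLike 𝕜]
    (V : ∀ i, Matrix (k i) n 𝕜) (s : Finset ι) :
    (∑ i ∈ s, (V i)ᴴ * V i).PosSemidef :=
  posSemidef_sum s fun i _ => posSemidef_conjTranspose_mul_self (V i)

/-- for an RS `V` and `J ⊆ {1,…,m}`, with
`M_J = I - ∑_{i∈J} Vᵢᴴ Vᵢ S_V⁻¹`, the truncated system `V_J = {Vᵢ}_{i∉J}` is an
RS iff `M_J` is invertible, and in that case `S_{V_J} = M_J S_V`. -/
theorem truncated_rs_iff_MJ_invertible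
    {d m : ℕ} (k : Fin m → ℕ) (V : ∀ i, Matrix (Fin (k i)) (Fin d) ℂ)
    (hV : (∑ i, (V i)ᴴ * V i).PosDef)
    (J : Finset (Fin m))
    (M : Matrix (Fin d) (Fin d) ℂ)
    (hM : M = 1 - (∑ i ∈ J, (V i)ᴴ * V i) * (∑ i, (V i)ᴴ * V i)⁻¹) :
    ((∑ i ∈ Jᶜ, (V i)ᴴ * V i).PosDef ↔ IsUnit M) ∧
    (∑ i ∈ Jᶜ, (V i)ᴴ * V i) = M * (∑ i, (V i)ᴴ * V i) := by
  have hS : IsUnit (∑ i, (V i)ᴴ * V i) := hV.isUnit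
  have hfactor : (∑ i ∈ Jᶜ, (V i)ᴴ * V i) = M * ∑ i, (V i)ᴴ * V i :=
    hM ▸ Matrix.sum_compl_eq_one_sub_mul_inv_mul _ J ((Matrix.isUnit_iff_isUnit_det _).mp hS)
  refine ⟨?_, hfactor⟩
  rw [(Matrix.posSemidef_sum_conjTranspose_mul_self V Jᶜ).posDef_iff_isUnit, hfactor,
    hS.mul_right_iff]
end

section
/- Let V = {V_i}_{i=1}^m be an RS for ℂ^d with bounds A_V = λ_min(S_V), B_V = ‖S_V‖, and let J ⊂ {1,…,m} with M_J = I - ∑_{i∈J} V_i* V_i S_V^{-1} invertible. Then the bounds of the RS V_J = {V_i}_{i∉J} satisfy A_V / ‖M_J^{-1}‖ ≤ A_{V_J} and B_{V_J} ≤ B_V. Moreover, the canonical dual of V_J is {V_i S_V^{-1} M_J^{-1}}_{i∉J}. -/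
/-!
Since `S_V = ∑_{i ∈ J} V_i* V_i + S_{V_J}`, the definition of `M_J` reads `M_J = S_{V_J} S_V⁻¹`.
Hence `S_{V_J}⁻¹ = S_V⁻¹ M_J⁻¹`, which is the canonical dual, and `S_V = M_J⁻¹ S_{V_J}`.
Testing `S_V` on a unit eigenvector `v` of `S_{V_J}` with eigenvalue `λ` gives
`A_V ≤ Re⟨v, S_V v⟩ = λ Re⟨v, M_J⁻¹ v⟩ ≤ λ ‖M_J⁻¹‖`, and `S_{V_J} ≤ S_V` in the Loewner order
gives `B_{V_J} ≤ B_V`. Both use the Rayleigh bounds `λ_min ‖x‖² ≤ Re⟨x, A x⟩ ≤ λ_max ‖x‖²`,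
read off the expansion of `x` in an orthonormal eigenbasis.
-/

open scoped Matrix ComplexOrder InnerProductSpace
open Matrix

/-- The ℓ²-operator norm of a (rectangular) complex matrix. -/
noncomputable def opn {m n : ℕ} (A : Matrix (Fin m) (Fin n) ℂ) : ℝ :=
  ‖LinearMap.toContinuousLinearMap (Matrix.toEuclideanLin A)‖

namespace Matrix

variable {n : Type*} [Fintype n] [DecidableEq n]

lemma re_inner_toEuclideanLin_le (N : Matrix n n ℂ) (x : EuclideanSpace ℂ n) :
    (⟪x, toEuclideanLin N x⟫_ℂ).re ≤
      ‖LinearMap.toContinuousLinearMap (toEuclideanLin N)‖ * ‖x‖ ^ 2 :=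
  calc (⟪x, toEuclideanLin N x⟫_ℂ).re ≤ ‖x‖ * ‖toEuclideanLin N x‖ := re_inner_le_norm (𝕜 := ℂ) _ _
    _ ≤ ‖x‖ * (‖LinearMap.toContinuousLinearMap (toEuclideanLin N)‖ * ‖x‖) := by
      gcongr
      exact (LinearMap.toContinuousLinearMap (toEuclideanLin N)).le_opNorm x
    _ = ‖LinearMap.toContinuousLinearMap (toEuclideanLin N)‖ * ‖x‖ ^ 2 := by ring

namespace IsHermitian

variable {A : Matrix n n ℂ} (hA : A.IsHermitian)

lemma toEuclideanLin_eigenvectorBasis (i : n) :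
    toEuclideanLin A (hA.eigenvectorBasis i) = (hA.eigenvalues i : ℂ) • hA.eigenvectorBasis i := by
  ext j
  simpa using congrFun (hA.mulVec_eigenvectorBasis i) j

lemma re_inner_toEuclideanLin_self (x : EuclideanSpace ℂ n) :
    (⟪x, toEuclideanLin A x⟫_ℂ).re =
      ∑ i, hA.eigenvalues i * ‖⟪hA.eigenvectorBasis i, x⟫_ℂ‖ ^ 2 := by
  rw [← hA.eigenvectorBasis.sum_inner_mul_inner, Complex.re_sum]
  refine Finset.sum_congr rfl fun i _ => ?_
  rw [← (isSymmetric_toEuclideanLin_iff.mpr hA) _ x, toEuclideanLin_eigenvectorBasis,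
    inner_smul_left, Complex.conj_ofReal, mul_left_comm, ← inner_conj_symm x, Complex.conj_mul']
  norm_cast

lemma iInf_eigenvalues_mul_le (x : EuclideanSpace ℂ n) :
    (⨅ i, hA.eigenvalues i) * ‖x‖ ^ 2 ≤ (⟪x, toEuclideanLin A x⟫_ℂ).re := by
  rw [re_inner_toEuclideanLin_self, ← hA.eigenvectorBasis.sum_sq_norm_inner_right, Finset.mul_sum]
  gcongr with i
  exact ciInf_le (Set.finite_range _).bddBelow i

lemma re_inner_le_iSup_eigenvalues_mul (x : EuclideanSpace ℂ n) :
    (⟪x, toEuclideanLin A x⟫_ℂ).re ≤ (⨆ i, hA.eigenvalues i) * ‖x‖ ^ 2 := by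
  rw [re_inner_toEuclideanLin_self, ← hA.eigenvectorBasis.sum_sq_norm_inner_right, Finset.mul_sum]
  gcongr with i
  exact le_ciSup (Set.finite_range _).bddAbove i

lemma eigenvalues_eq_re_inner (i : n) :
    hA.eigenvalues i =
      (⟪hA.eigenvectorBasis i, toEuclideanLin A (hA.eigenvectorBasis i)⟫_ℂ).re := by
  simp [toEuclideanLin_eigenvectorBasis, hA.eigenvectorBasis.orthonormal.1 i]

end IsHermitian

lemma iSup_eigenvalues_le_of_posSemidef_sub {A B : Matrix n n ℂ} (hA : A.IsHermitian)
    (hB : B.PosSemidef) (hAB : (B - A).PosSemidef) :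
    ⨆ i, hA.eigenvalues i ≤ ⨆ i, hB.1.eigenvalues i := by
  refine Real.iSup_le (fun i => ?_) (Real.iSup_nonneg hB.eigenvalues_nonneg)
  set v := hA.eigenvectorBasis i
  have hgap : 0 ≤ (⟪v, toEuclideanLin (B - A) v⟫_ℂ).re :=
    (isPositive_toEuclideanLin_iff.mpr hAB).re_inner_nonneg_right v
  calc hA.eigenvalues i = (⟪v, toEuclideanLin A v⟫_ℂ).re := hA.eigenvalues_eq_re_inner i
    _ ≤ (⟪v, toEuclideanLin B v⟫_ℂ).re := by
      simpa [map_sub, LinearMap.sub_apply, inner_sub_right] using hgap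
    _ ≤ (⨆ i, hB.1.eigenvalues i) * ‖v‖ ^ 2 := hB.1.re_inner_le_iSup_eigenvalues_mul v
    _ = ⨆ i, hB.1.eigenvalues i := by simp [v, hA.eigenvectorBasis.orthonormal.1 i]

lemma iInf_eigenvalues_le_mul_norm_of_eq_mul {A B N : Matrix n n ℂ} (hA : A.IsHermitian)
    (hB : B.PosSemidef) (hNB : A = N * B) :
    ⨅ i, hA.eigenvalues i ≤
      (⨅ i, hB.1.eigenvalues i) * ‖LinearMap.toContinuousLinearMap (toEuclideanLin N)‖ := by
  rcases isEmpty_or_nonempty n with _ | _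
  · simp [Real.iInf_of_isEmpty]
  rw [Real.iInf_mul_of_nonneg (norm_nonneg _)]
  refine le_ciInf fun i => ?_
  set v := hB.1.eigenvectorBasis i
  have hv : ‖v‖ = 1 := hB.1.eigenvectorBasis.orthonormal.1 i
  have hAv : toEuclideanLin A v = (hB.1.eigenvalues i : ℂ) • toEuclideanLin N v := by
    rw [← map_smul, ← hB.1.toEuclideanLin_eigenvectorBasis, hNB]
    ext j
    simp [v]
  calc ⨅ i, hA.eigenvalues i = (⨅ i, hA.eigenvalues i) * ‖v‖ ^ 2 := by simp [hv]
    _ ≤ (⟪v, toEuclideanLin A v⟫_ℂ).re := hA.iInf_eigenvalues_mul_le v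
    _ = hB.1.eigenvalues i * (⟪v, toEuclideanLin N v⟫_ℂ).re := by
      rw [hAv, inner_smul_right, Complex.re_ofReal_mul]
    _ ≤ hB.1.eigenvalues i * ‖LinearMap.toContinuousLinearMap (toEuclideanLin N)‖ := by
      gcongr
      · exact hB.eigenvalues_nonneg i
      · simpa [hv] using re_inner_toEuclideanLin_le N v

end Matrix

/-- `A_V = λ_min(S_V)` and `B_V = ‖S_V‖` are expressed through the eigenvalues of the Hermitian
matrix `S_V` (for a positive definite matrix the spectral norm is the largest eigenvalue). -/
theorem truncated_rs_bounds_and_canonical_dual_general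
    {d m : ℕ} (k : Fin m → ℕ) (V : ∀ i, Matrix (Fin (k i)) (Fin d) ℂ)
    (hV : (∑ i, (V i)ᴴ * V i).PosDef)
    (J : Finset (Fin m))
    (M : Matrix (Fin d) (Fin d) ℂ)
    (hM : M = 1 - (∑ i ∈ J, (V i)ᴴ * V i) * (∑ i, (V i)ᴴ * V i)⁻¹)
    (hSJ : (∑ i ∈ Jᶜ, (V i)ᴴ * V i).PosDef) :
    (⨅ i, hV.1.eigenvalues i) / opn M⁻¹ ≤ (⨅ i, hSJ.1.eigenvalues i) ∧
    (⨆ i, hSJ.1.eigenvalues i) ≤ (⨆ i, hV.1.eigenvalues i) ∧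
    ∀ i ∉ J, V i * (∑ j ∈ Jᶜ, (V j)ᴴ * V j)⁻¹ =
      V i * (∑ j, (V j)ᴴ * V j)⁻¹ * M⁻¹ := by
  set S := ∑ i, (V i)ᴴ * V i
  set SJ := ∑ i ∈ Jᶜ, (V i)ᴴ * V i
  have hSdet : IsUnit S.det := (isUnit_iff_isUnit_det S).mp hV.isUnit
  have hSJdet : IsUnit SJ.det := (isUnit_iff_isUnit_det SJ).mp hSJ.isUnit
  have hS_sub : ∑ i ∈ J, (V i)ᴴ * V i = S - SJ := eq_sub_of_add_eq (Finset.sum_add_sum_compl J _)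
  have hM_eq : M = SJ * S⁻¹ := by
    rw [hM, hS_sub, sub_mul, mul_nonsing_inv _ hSdet, sub_sub_cancel]
  have hM_inv : M⁻¹ = S * SJ⁻¹ := by
    rw [hM_eq, Matrix.mul_inv_rev, nonsing_inv_nonsing_inv _ hSdet]
  have hS_eq : S = M⁻¹ * SJ := by
    rw [hM_inv, Matrix.mul_assoc, nonsing_inv_mul _ hSJdet, Matrix.mul_one]
  refine ⟨?_, iSup_eigenvalues_le_of_posSemidef_sub hSJ.1 hV.posSemidef ?_, fun i _ => ?_⟩
  · exact div_le_of_le_mul₀ (norm_nonneg _) (Real.iInf_nonneg hSJ.posSemidef.eigenvalues_nonneg)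
      (iInf_eigenvalues_le_mul_norm_of_eq_mul hV.1 hSJ.posSemidef hS_eq)
  · rw [← hS_sub]
    exact posSemidef_sum J fun i _ => posSemidef_conjTranspose_mul_self (V i)
  · rw [hM_inv, Matrix.mul_assoc, ← Matrix.mul_assoc S⁻¹, nonsing_inv_mul _ hSdet, Matrix.one_mul]

/-- bounds of the truncated RS `V_J` and its canonical dual.
Here `A_V = λ_min(S_V)` and `B_V = ‖S_V‖` are expressed through the eigenvalues
of the Hermitian matrix `S_V` (for a positive definite matrix the spectral norm
is the largest eigenvalue). -/
theorem truncated_rs_bounds_and_canonical_dual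
    {d m : ℕ} (k : Fin m → ℕ) (V : ∀ i, Matrix (Fin (k i)) (Fin d) ℂ)
    (hV : (∑ i, (V i)ᴴ * V i).PosDef)
    (J : Finset (Fin m))
    (M : Matrix (Fin d) (Fin d) ℂ)
    (hM : M = 1 - (∑ i ∈ J, (V i)ᴴ * V i) * (∑ i, (V i)ᴴ * V i)⁻¹)
    (hMJ : IsUnit M)
    (hSJ : (∑ i ∈ Jᶜ, (V i)ᴴ * V i).PosDef) :
    (⨅ i, hV.1.eigenvalues i) / opn M⁻¹ ≤ (⨅ i, hSJ.1.eigenvalues i) ∧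
    (⨆ i, hSJ.1.eigenvalues i) ≤ (⨆ i, hV.1.eigenvalues i) ∧
    ∀ i ∉ J, V i * (∑ j ∈ Jᶜ, (V j)ᴴ * V j)⁻¹ =
      V i * (∑ j, (V j)ᴴ * V j)⁻¹ * M⁻¹ :=
  truncated_rs_bounds_and_canonical_dual_general k V hV J M hM hSJ
end

section
/- Let V = {V_i}_{i=1}^m be an RS for ℂ^d with lower bound A_V = λ_min(S_V), and J ⊂ {1,…,m} with ∑_{i∈J} ‖V_i‖² < A_V (operator norms). Then M_J = I - ∑_{i∈J} V_i* V_i S_V^{-1} is invertible, so V_J = {V_i}_{i∉J} is an RS, and its lower bound satisfies A_{V_J} ≥ A_V - ∑_{i∈J} ‖V_i‖². -/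
/-!
In the Loewner order, `S_V ≥ A_V • 1` and `Vᵢᴴ Vᵢ ≤ ‖Vᵢ‖² • 1`, so
`S_{V_J} = S_V - ∑_{i∈J} Vᵢᴴ Vᵢ ≥ (A_V - ∑_{i∈J} ‖Vᵢ‖²) • 1 > 0`. This makes `S_{V_J}` positive
definite with the stated bound on its smallest eigenvalue, and `M_J = S_{V_J} S_V⁻¹` is a product
of invertible matrices.
-/

open scoped Matrix ComplexOrder

open scoped MatrixOrder Matrix.Norms.L2Operator

namespace Matrix

variable {𝕜 ι n : Type*} [RCLike 𝕜] [Fintype n] [DecidableEq n]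

lemma IsHermitian.algebraMap_le_iff_forall_le_eigenvalues {A : Matrix n n 𝕜}
    (hA : A.IsHermitian) {r : ℝ} :
    algebraMap ℝ _ r ≤ A ↔ ∀ i, r ≤ hA.eigenvalues i := by
  rw [algebraMap_le_iff_le_spectrum hA.isSelfAdjoint, hA.spectrum_real_eq_range_eigenvalues,
    Set.forall_mem_range]

lemma IsHermitian.algebraMap_le_iff_le_iInf_eigenvalues [Nonempty n] {A : Matrix n n 𝕜}
    (hA : A.IsHermitian) {r : ℝ} :
    algebraMap ℝ _ r ≤ A ↔ r ≤ ⨅ i, hA.eigenvalues i := by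
  rw [hA.algebraMap_le_iff_forall_le_eigenvalues, le_ciInf_iff (Finite.bddBelow_range _)]

lemma conjTranspose_mul_self_le_algebraMap_l2_opNorm_sq {m : Type*} [Fintype m]
    (A : Matrix m n ℂ) : Aᴴ * A ≤ algebraMap ℝ _ (‖A‖ ^ 2) := by
  rw [sq, ← l2_opNorm_conjTranspose_mul_self]
  exact IsSelfAdjoint.le_algebraMap_norm_self (isHermitian_conjTranspose_mul_self A).isSelfAdjoint

lemma sum_conjTranspose_mul_self_le_algebraMap_sum_l2_opNorm_sq {m : ι → Type*}
    [∀ i, Fintype (m i)] (s : Finset ι) (V : ∀ i, Matrix (m i) n ℂ) :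
    ∑ i ∈ s, (V i)ᴴ * V i ≤ algebraMap ℝ _ (∑ i ∈ s, ‖V i‖ ^ 2) := by
  rw [map_sum]
  exact Finset.sum_le_sum fun i _ ↦ conjTranspose_mul_self_le_algebraMap_l2_opNorm_sq (V i)

lemma posDef_of_algebraMap_le {A : Matrix n n ℂ} {r : ℝ} (hr : 0 < r)
    (h : algebraMap ℝ _ r ≤ A) : A.PosDef :=
  isStrictlyPositive_iff_posDef.mp ((isStrictlyPositive_algebraMap hr).of_le h)

end Matrix

open Matrix

lemma opn_eq_l2_opNorm {k d : ℕ} (A : Matrix (Fin k) (Fin d) ℂ) : opn A = ‖A‖ := rfl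

/-- if `∑_{i∈J} ‖Vᵢ‖² < A_V = λ_min(S_V)`, then
`M_J = I - ∑_{i∈J} Vᵢᴴ Vᵢ S_V⁻¹` is invertible, so `V_J` is an RS, and its lower
bound satisfies `A_{V_J} ≥ A_V - ∑_{i∈J} ‖Vᵢ‖²`. -/
theorem truncated_rs_sufficient_condition
    {d m : ℕ} (k : Fin m → ℕ) (V : ∀ i, Matrix (Fin (k i)) (Fin d) ℂ)
    (hV : (∑ i, (V i)ᴴ * V i).PosDef)
    (J : Finset (Fin m))
    (hJ : (∑ i ∈ J, opn (V i) ^ 2) < ⨅ i, hV.1.eigenvalues i)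
    (M : Matrix (Fin d) (Fin d) ℂ)
    (hM : M = 1 - (∑ i ∈ J, (V i)ᴴ * V i) * (∑ i, (V i)ᴴ * V i)⁻¹) :
    IsUnit M ∧
    ∃ hSJ : (∑ i ∈ Jᶜ, (V i)ᴴ * V i).PosDef,
      (⨅ i, hV.1.eigenvalues i) - (∑ i ∈ J, opn (V i) ^ 2) ≤
        ⨅ i, hSJ.1.eigenvalues i := by
  simp only [opn_eq_l2_opNorm] at hJ ⊢
  -- for `d = 0` the infimum is the junk value `0`, which `hJ` rules out
  have : Nonempty (Fin d) := by
    by_contra! h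
    rw [Real.iInf_of_isEmpty] at hJ
    exact hJ.not_ge (by positivity)
  have hsplit := Finset.sum_add_sum_compl J fun i ↦ (V i)ᴴ * V i
  have hS_ge : algebraMap ℝ _ (⨅ i, hV.1.eigenvalues i) ≤ ∑ i, (V i)ᴴ * V i :=
    hV.1.algebraMap_le_iff_le_iInf_eigenvalues.mpr le_rfl
  have hSJ_ge : algebraMap ℝ _ ((⨅ i, hV.1.eigenvalues i) - ∑ i ∈ J, ‖V i‖ ^ 2) ≤
      ∑ i ∈ Jᶜ, (V i)ᴴ * V i := by
    rw [map_sub, eq_sub_of_add_eq' hsplit]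
    exact sub_le_sub hS_ge (sum_conjTranspose_mul_self_le_algebraMap_sum_l2_opNorm_sq J V)
  have hSJ : (∑ i ∈ Jᶜ, (V i)ᴴ * V i).PosDef := posDef_of_algebraMap_le (sub_pos.2 hJ) hSJ_ge
  refine ⟨?_, hSJ, hSJ.1.algebraMap_le_iff_le_iInf_eigenvalues.mp hSJ_ge⟩
  have hM_eq : M = (∑ i ∈ Jᶜ, (V i)ᴴ * V i) * (∑ i, (V i)ᴴ * V i)⁻¹ := by
    rw [hM, ← mul_nonsing_inv _ ((isUnit_iff_isUnit_det _).mp hV.isUnit), ← sub_mul, ← hsplit,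
      add_sub_cancel_left]
  exact hM_eq ▸ hSJ.isUnit.mul hV.inv.isUnit
end

section
/- Let k ≤ n and A ∈ ℂ^{n×k} have full rank k, with polar decomposition A = U|A| where U ∈ ℂ^{n×k} is an isometry (U*U = I_k). Then ‖A - U‖_F = min over all isometries V ∈ ℂ^{n×k} of ‖A - V‖_F. -/
open scoped Matrix ComplexOrder

/-- The square root of a positive semidefinite matrix, as `Matrix.PosSemidef.sqrt` was
defined in Mathlib (December 2024); that definition has since been removed. -/
noncomputable def Matrix.PosSemidef.sqrt {n 𝕜 : Type*} [Fintype n] [RCLike 𝕜] [DecidableEq n]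
    {A : Matrix n n 𝕜} (hA : Matrix.PosSemidef A) : Matrix n n 𝕜 :=
  hA.1.eigenvectorUnitary.1 * Matrix.diagonal ((↑) ∘ (√·) ∘ hA.1.eigenvalues) *
  (star hA.1.eigenvectorUnitary : Matrix n n 𝕜)

/-!
Since `Uᴴ U = Wᴴ W = 1`, `‖A - V‖² = ‖A‖² + k - 2 Re tr(Vᴴ A)` for `V ∈ {U, W}`, so it suffices
that `Re tr(Wᴴ A) ≤ Re tr(Uᴴ A) = tr |A|`. Writing `|A| = Bᴴ B`, this is the inequality
`0 ≤ ‖(U - W) Bᴴ‖²`, whose expansion is `2 tr |A| - 2 Re tr(Wᴴ A)`.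
-/

namespace Matrix

theorem PosSemidef.posSemidef_sqrt {n 𝕜 : Type*} [Fintype n] [RCLike 𝕜] [DecidableEq n]
    {A : Matrix n n 𝕜} (hA : A.PosSemidef) : hA.sqrt.PosSemidef := by
  unfold PosSemidef.sqrt
  rw [star_eq_conjTranspose]
  refine PosSemidef.mul_mul_conjTranspose_same ?_ _
  rw [posSemidef_diagonal_iff]
  intro i
  simp only [Function.comp_apply]
  exact_mod_cast Real.sqrt_nonneg _

open scoped MatrixOrder in
theorem PosSemidef.exists_eq_conjTranspose_mul_self {n 𝕜 : Type*} [Fintype n] [RCLike 𝕜]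
    [DecidableEq n] {P : Matrix n n 𝕜} (hP : P.PosSemidef) : ∃ B : Matrix n n 𝕜, P = Bᴴ * B :=
  CStarAlgebra.nonneg_iff_eq_star_mul_self.mp hP.nonneg

variable {m n 𝕜 : Type*} [Fintype m] [Fintype n] [RCLike 𝕜]

theorem re_trace_conjTranspose_mul_comm (X Y : Matrix m n 𝕜) :
    RCLike.re (trace (Xᴴ * Y)) = RCLike.re (trace (Yᴴ * X)) := by
  rw [← conjTranspose_conjTranspose (Yᴴ * X), trace_conjTranspose, RCLike.star_def,
    RCLike.conj_re, conjTranspose_mul, conjTranspose_conjTranspose]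

theorem re_trace_conjTranspose_mul_self_sub (X Y : Matrix m n 𝕜) :
    RCLike.re (trace ((X - Y)ᴴ * (X - Y))) = RCLike.re (trace (Xᴴ * X))
      + RCLike.re (trace (Yᴴ * Y)) - 2 * RCLike.re (trace (Yᴴ * X)) := by
  have hexpand : (X - Y)ᴴ * (X - Y) = Xᴴ * X + Yᴴ * Y - Xᴴ * Y - Yᴴ * X := by
    rw [conjTranspose_sub, Matrix.sub_mul, Matrix.mul_sub, Matrix.mul_sub]; abel
  rw [hexpand, trace_sub, trace_sub, trace_add, map_sub, map_sub, map_add,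
    re_trace_conjTranspose_mul_comm X Y]
  ring

theorem re_trace_conjTranspose_mul_self_nonneg (X : Matrix m n 𝕜) :
    0 ≤ RCLike.re (trace (Xᴴ * X)) :=
  (RCLike.nonneg_iff.mp (posSemidef_conjTranspose_mul_self X).trace_nonneg).1

theorem conjTranspose_mul_self_isometry_mul [DecidableEq n] {k : Type*} [Fintype k]
    {U : Matrix m n 𝕜} (hU : Uᴴ * U = 1) (C : Matrix n k 𝕜) : (U * C)ᴴ * (U * C) = Cᴴ * C := by
  rw [conjTranspose_mul, Matrix.mul_assoc, ← Matrix.mul_assoc Uᴴ, hU, Matrix.one_mul]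

theorem re_trace_isometry_mul_posSemidef_le [DecidableEq n] {U W : Matrix m n 𝕜}
    (hU : Uᴴ * U = 1) (hW : Wᴴ * W = 1) {P : Matrix n n 𝕜} (hP : P.PosSemidef) :
    RCLike.re (trace (Wᴴ * (U * P))) ≤ RCLike.re (trace P) := by
  obtain ⟨B, rfl⟩ := hP.exists_eq_conjTranspose_mul_self
  have hnorm : ∀ {V : Matrix m n 𝕜}, Vᴴ * V = 1 →
      trace ((V * Bᴴ)ᴴ * (V * Bᴴ)) = trace (Bᴴ * B) := fun hV ↦ by
    rw [conjTranspose_mul_self_isometry_mul hV, conjTranspose_conjTranspose, trace_mul_comm]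
  have hcross : trace ((W * Bᴴ)ᴴ * (U * Bᴴ)) = trace (Wᴴ * (U * (Bᴴ * B))) := by
    rw [conjTranspose_mul, conjTranspose_conjTranspose, Matrix.mul_assoc, trace_mul_comm]
    simp only [Matrix.mul_assoc]
  have hsq := re_trace_conjTranspose_mul_self_nonneg (U * Bᴴ - W * Bᴴ)
  rw [re_trace_conjTranspose_mul_self_sub, hnorm hU, hnorm hW, hcross] at hsq
  linarith

theorem re_trace_sub_polar_le [DecidableEq n] {A U W : Matrix m n 𝕜} {P : Matrix n n 𝕜}
    (hU : Uᴴ * U = 1) (hW : Wᴴ * W = 1) (hP : P.PosSemidef) (hpolar : A = U * P) :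
    RCLike.re (trace ((A - U)ᴴ * (A - U))) ≤ RCLike.re (trace ((A - W)ᴴ * (A - W))) := by
  have hUA : Uᴴ * A = P := by rw [hpolar, ← Matrix.mul_assoc, hU, Matrix.one_mul]
  have hWA := re_trace_isometry_mul_posSemidef_le hU hW hP
  rw [← hpolar] at hWA
  rw [re_trace_conjTranspose_mul_self_sub, re_trace_conjTranspose_mul_self_sub, hU, hW, hUA]
  linarith

end Matrix

theorem polar_isometry_best_approximation_general
    {k n : ℕ} (A : Matrix (Fin n) (Fin k) ℂ)
    (U : Matrix (Fin n) (Fin k) ℂ) (hU : Uᴴ * U = 1)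
    (hpolar : A = U * (Matrix.posSemidef_conjTranspose_mul_self A).sqrt) :
    ∀ W : Matrix (Fin n) (Fin k) ℂ, Wᴴ * W = 1 → frob (A - U) ≤ frob (A - W) := fun _ hW ↦
  Real.sqrt_le_sqrt <| Matrix.re_trace_sub_polar_le hU hW
    (Matrix.posSemidef_conjTranspose_mul_self A).posSemidef_sqrt hpolar

/-- if `A ∈ ℂ^{n×k}` (`k ≤ n`) has full rank and polar
decomposition `A = U |A|` with `U` an isometry, then `U` is a Frobenius-norm best
isometric approximation of `A`. -/
theorem polar_isometry_best_approximation
    {k n : ℕ} (hkn : k ≤ n) (A : Matrix (Fin n) (Fin k) ℂ)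
    (hrank : A.rank = k)
    (U : Matrix (Fin n) (Fin k) ℂ) (hU : Uᴴ * U = 1)
    (hpolar : A = U * (Matrix.posSemidef_conjTranspose_mul_self A).sqrt) :
    ∀ W : Matrix (Fin n) (Fin k) ℂ, Wᴴ * W = 1 → frob (A - U) ≤ frob (A - W) :=
  polar_isometry_best_approximation_general A U hU hpolar
end

section
/- Let V₁, V₂ : ℂ⁴ → ℂ² be defined by V₁(x₁,x₂,x₃,x₄) = (x₁,x₂) and V₂(x₁,x₂,x₃,x₄) = (x₃, (x₂ - x₄)/√2). Then V = (V₁, V₂) is a projective reconstruction system for ℂ⁴ with weights (1,1), but V admits no projective dual: there is no pair (W₁, W₂) with W₁* V₁ + W₂* V₂ = I and each W_i W_i* a positive multiple of I_{ℂ²}. -/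
/-!
Stacking `V₁` over `V₂` gives an invertible `4 × 4` matrix, so a dual `(W₁, W₂)` is unique:
`W₁ᴴ` must be the matrix `B` with `V₁ B = 1` and `V₂ B = 0`, whose columns are `e₁` and
`e₂ + e₄`. Then `W₁ W₁ᴴ = Bᴴ B = diag(1, 2)` is not a multiple of the identity. Conversely, any
dual is a left inverse of the stacked matrix, which makes the frame operator positive definite.
-/

open scoped Matrix ComplexOrder

namespace Matrix

variable {R : Type*} {n m₁ m₂ : Type*}

theorem ne_smul_one_of_apply_ne [Semiring R] [DecidableEq n] {M : Matrix n n R} {i j : n}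
    (h : M i i ≠ M j j) (c : R) : M ≠ c • 1 := by
  rintro rfl
  simp at h

variable [Fintype n] [Fintype m₁] [Fintype m₂]

theorem eq_of_mul_add_mul_eq_one [Semiring R] [DecidableEq n] [DecidableEq m₁]
    {X₁ : Matrix n m₁ R} {X₂ : Matrix n m₂ R}
    {V₁ : Matrix m₁ n R} {V₂ : Matrix m₂ n R} {B : Matrix n m₁ R}
    (hX : X₁ * V₁ + X₂ * V₂ = 1) (hB₁ : V₁ * B = 1) (hB₂ : V₂ * B = 0) : X₁ = B :=
  calc X₁ = X₁ * (V₁ * B) + X₂ * (V₂ * B) := by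
        rw [hB₁, hB₂, Matrix.mul_one, Matrix.mul_zero, add_zero]
    _ = (X₁ * V₁ + X₂ * V₂) * B := by rw [Matrix.add_mul, Matrix.mul_assoc, Matrix.mul_assoc]
    _ = B := by rw [hX, Matrix.one_mul]

theorem posDef_conjTranspose_mul_add_conjTranspose_mul [CommRing R] [PartialOrder R] [StarRing R]
    [StarOrderedRing R] [NoZeroDivisors R] [DecidableEq n]
    {V₁ : Matrix m₁ n R} {V₂ : Matrix m₂ n R} {L₁ : Matrix n m₁ R} {L₂ : Matrix n m₂ R}
    (hL : L₁ * V₁ + L₂ * V₂ = 1) : (V₁ᴴ * V₁ + V₂ᴴ * V₂).PosDef := by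
  have hleft : fromCols L₁ L₂ * fromRows V₁ V₂ = 1 := by rw [fromCols_mul_fromRows, hL]
  have hinj : Function.Injective (fromRows V₁ V₂).mulVec := fun x y hxy => by
    have := congrArg (fromCols L₁ L₂).mulVec hxy
    rwa [mulVec_mulVec, mulVec_mulVec, hleft, one_mulVec, one_mulVec] at this
  rw [← fromCols_mul_fromRows, ← conjTranspose_fromRows_eq_fromCols_conjTranspose]
  exact PosDef.conjTranspose_mul_self _ hinj

end Matrix

open Matrix

section RieszExample

variable (a : ℂ)

theorem rieszV₁_mul_dual₁ :
    (!![1, 0, 0, 0; 0, 1, 0, 0] : Matrix (Fin 2) (Fin 4) ℂ) *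
      (!![1, 0; 0, 1; 0, 0; 0, 1] : Matrix (Fin 4) (Fin 2) ℂ) = 1 := by
  ext i j; fin_cases i <;> fin_cases j <;> simp

theorem rieszV₂_mul_dual₁ :
    (!![0, 0, 1, 0; 0, a, 0, -a] : Matrix (Fin 2) (Fin 4) ℂ) *
      (!![1, 0; 0, 1; 0, 0; 0, 1] : Matrix (Fin 4) (Fin 2) ℂ) = 0 := by
  ext i j; fin_cases i <;> fin_cases j <;> simp

theorem riesz_dual_mul_add_mul_eq_one (ha : a ≠ 0) :
    (!![1, 0; 0, 1; 0, 0; 0, 1] : Matrix (Fin 4) (Fin 2) ℂ) *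
        (!![1, 0, 0, 0; 0, 1, 0, 0] : Matrix (Fin 2) (Fin 4) ℂ) +
      (!![0, 0; 0, 0; 1, 0; 0, -a⁻¹] : Matrix (Fin 4) (Fin 2) ℂ) *
        (!![0, 0, 1, 0; 0, a, 0, -a] : Matrix (Fin 2) (Fin 4) ℂ) = 1 := by
  ext i j; fin_cases i <;> fin_cases j <;> simp [ha]

theorem rieszV₁_mul_conjTranspose :
    (!![1, 0, 0, 0; 0, 1, 0, 0] : Matrix (Fin 2) (Fin 4) ℂ) *
      (!![1, 0, 0, 0; 0, 1, 0, 0] : Matrix (Fin 2) (Fin 4) ℂ)ᴴ = 1 := by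
  ext i j; fin_cases i <;> fin_cases j <;> simp [mul_apply, Fin.sum_univ_four]

theorem rieszV₂_mul_conjTranspose (ha : 2 * (a * starRingEnd ℂ a) = 1) :
    (!![0, 0, 1, 0; 0, a, 0, -a] : Matrix (Fin 2) (Fin 4) ℂ) *
      (!![0, 0, 1, 0; 0, a, 0, -a] : Matrix (Fin 2) (Fin 4) ℂ)ᴴ = 1 := by
  ext i j; fin_cases i <;> fin_cases j <;> simp [mul_apply, Fin.sum_univ_four]
  linear_combination ha

theorem riesz_dual₁_gram :
    (!![1, 0; 0, 1; 0, 0; 0, 1] : Matrix (Fin 4) (Fin 2) ℂ)ᴴ *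
      (!![1, 0; 0, 1; 0, 0; 0, 1] : Matrix (Fin 4) (Fin 2) ℂ) = !![1, 0; 0, 2] := by
  ext i j; fin_cases i <;> fin_cases j <;> simp [mul_apply, Fin.sum_univ_four, one_add_one_eq_two]

end RieszExample

/-- the concrete pair `V₁(x) = (x₁,x₂)`,
`V₂(x) = (x₃, (x₂-x₄)/√2)` is a projective reconstruction system for `ℂ⁴` with
weights `(1,1)`, but it admits no projective dual. -/
theorem riesz_example_no_projective_dual
    (V₁ V₂ : Matrix (Fin 2) (Fin 4) ℂ)
    (hV₁ : V₁ = !![1, 0, 0, 0; 0, 1, 0, 0])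
    (hV₂ : V₂ = !![0, 0, 1, 0;
                   0, ((Real.sqrt 2 : ℝ) : ℂ)⁻¹, 0, -((Real.sqrt 2 : ℝ) : ℂ)⁻¹]) :
    -- `V = (V₁, V₂)` is a projective RS with weights `(1,1)`
    (V₁ᴴ * V₁ + V₂ᴴ * V₂).PosDef ∧
    V₁ * V₁ᴴ = 1 ∧ V₂ * V₂ᴴ = 1 ∧
    -- but it has no projective dual
    ¬ ∃ W₁ W₂ : Matrix (Fin 2) (Fin 4) ℂ,
        W₁ᴴ * V₁ + W₂ᴴ * V₂ = 1 ∧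
        (∃ c₁ : ℝ, 0 < c₁ ∧ W₁ * W₁ᴴ = ((c₁ : ℝ) : ℂ) • 1) ∧
        (∃ c₂ : ℝ, 0 < c₂ ∧ W₂ * W₂ᴴ = ((c₂ : ℝ) : ℂ) • 1) := by
  subst hV₁ hV₂
  have ha₀ : ((Real.sqrt 2 : ℝ) : ℂ)⁻¹ ≠ 0 := by simp
  have ha₂ : 2 * (((Real.sqrt 2 : ℝ) : ℂ)⁻¹ * starRingEnd ℂ ((Real.sqrt 2 : ℝ) : ℂ)⁻¹) = 1 := by
    rw [map_inv₀, Complex.conj_ofReal, ← mul_inv, ← Complex.ofReal_mul,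
      Real.mul_self_sqrt zero_le_two]
    norm_num
  refine ⟨posDef_conjTranspose_mul_add_conjTranspose_mul (riesz_dual_mul_add_mul_eq_one _ ha₀),
    rieszV₁_mul_conjTranspose, rieszV₂_mul_conjTranspose _ ha₂, ?_⟩
  rintro ⟨W₁, W₂, hW, ⟨c₁, -, hc₁⟩, -⟩
  have hW₁ := eq_of_mul_add_mul_eq_one hW rieszV₁_mul_dual₁ (rieszV₂_mul_dual₁ _)
  nth_rw 1 [← conjTranspose_conjTranspose W₁] at hc₁
  rw [hW₁, riesz_dual₁_gram] at hc₁
  exact ne_smul_one_of_apply_ne (i := 0) (j := 1) (by simp) _ hc₁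
end
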